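/- arXiv:2501.03149 — 5 statements merged into one kernel-verified Lean document; each statement's English description precedes it below -/
import Mathlib

section
/- For velocity vectors u, v in the open unit ball of ℝ³, define Einstein addition u ⊕ v := (1/(1 + u·v)) · (u + v‖ + √(1-‖u‖²) · v⊥), where v‖ is the component of v parallel to u and v⊥ the orthogonal component. Then the gamma factors satisfy γ(u ⊕ v) = γ(u) · γ(v) · (1 + u·v), where γ(w) := 1/√(1-‖w‖²). -/
open scoped RealInnerProductSpace Classical

noncomputable def eAdd (u v : EuclideanSpace ℝ (Fin 3)) : EuclideanSpace ℝ (Fin 3) :=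
  if u = 0 then v else
    (1 + ⟪u, v⟫)⁻¹ •
      (u + (⟪u, v⟫ / ‖u‖ ^ 2) • u +
        Real.sqrt (1 - ‖u‖ ^ 2) • (v - (⟪u, v⟫ / ‖u‖ ^ 2) • u))

noncomputable def egamma (w : EuclideanSpace ℝ (Fin 3)) : ℝ :=
  (Real.sqrt (1 - ‖w‖ ^ 2))⁻¹

/-!
Split `v` into its components along and orthogonal to `u`. The numerator of `u ⊕ v` is then
`(1 + u·v/‖u‖²) u + √(1 - ‖u‖²) v⊥`, a sum of orthogonal vectors, and Pythagoras gives its squared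
norm as `(1 + u·v)² - (1 - ‖u‖²)(1 - ‖v‖²)`. Hence
`1 - ‖u ⊕ v‖² = (1 - ‖u‖²)(1 - ‖v‖²) / (1 + u·v)²`, and since `1 + u·v > 0` by Cauchy–Schwarz,
taking square roots gives the identity.
-/

section InnerProductSpace

variable {E : Type*} [NormedAddCommGroup E] [InnerProductSpace ℝ E]

theorem inner_sub_proj_eq_zero {u : E} (hu : u ≠ 0) (v : E) :
    ⟪u, v - (⟪u, v⟫ / ‖u‖ ^ 2) • u⟫ = 0 := by
  have : ‖u‖ ≠ 0 := norm_ne_zero_iff.mpr hu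
  rw [inner_sub_right, real_inner_smul_right, real_inner_self_eq_norm_sq]
  field_simp
  ring

theorem norm_sq_sub_proj {u : E} (hu : u ≠ 0) (v : E) :
    ‖v - (⟪u, v⟫ / ‖u‖ ^ 2) • u‖ ^ 2 = ‖v‖ ^ 2 - ⟪u, v⟫ ^ 2 / ‖u‖ ^ 2 := by
  have : ‖u‖ ≠ 0 := norm_ne_zero_iff.mpr hu
  rw [← real_inner_self_eq_norm_sq, inner_sub_left, inner_sub_right, inner_sub_right,
    real_inner_smul_left, real_inner_smul_right, real_inner_smul_left, real_inner_smul_right,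
    real_inner_self_eq_norm_sq, real_inner_self_eq_norm_sq, real_inner_comm v u]
  field_simp
  ring

theorem norm_sq_einstein_numerator {u : E} (hu : u ≠ 0) (v : E) {s : ℝ}
    (hs : s ^ 2 = 1 - ‖u‖ ^ 2) :
    ‖u + (⟪u, v⟫ / ‖u‖ ^ 2) • u + s • (v - (⟪u, v⟫ / ‖u‖ ^ 2) • u)‖ ^ 2
      = (1 + ⟪u, v⟫) ^ 2 - (1 - ‖u‖ ^ 2) * (1 - ‖v‖ ^ 2) := by
  have hu' : ‖u‖ ≠ 0 := norm_ne_zero_iff.mpr hu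
  have horth : ⟪(1 + ⟪u, v⟫ / ‖u‖ ^ 2) • u, s • (v - (⟪u, v⟫ / ‖u‖ ^ 2) • u)⟫ = 0 := by
    rw [real_inner_smul_left, real_inner_smul_right, inner_sub_proj_eq_zero hu, mul_zero, mul_zero]
  rw [show u + (⟪u, v⟫ / ‖u‖ ^ 2) • u = (1 + ⟪u, v⟫ / ‖u‖ ^ 2) • u by rw [add_smul, one_smul],
    norm_add_sq_real, horth, mul_zero, add_zero, norm_smul, norm_smul,
    mul_pow, mul_pow, norm_sq_sub_proj hu, Real.norm_eq_abs, Real.norm_eq_abs, sq_abs, sq_abs, hs]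
  field_simp
  ring

theorem one_add_inner_pos {u v : E} (hu : ‖u‖ < 1) (hv : ‖v‖ ≤ 1) : 0 < 1 + ⟪u, v⟫ := by
  have : |⟪u, v⟫| < 1 :=
    (abs_real_inner_le_norm u v).trans_lt
      (mul_lt_one_of_nonneg_of_lt_one_left (norm_nonneg u) hu hv)
  linarith [neg_abs_le ⟪u, v⟫]

end InnerProductSpace

theorem one_sub_norm_sq_eAdd {u v : EuclideanSpace ℝ (Fin 3)} (hu : ‖u‖ ≤ 1)
    (huv : 1 + ⟪u, v⟫ ≠ 0) :
    1 - ‖eAdd u v‖ ^ 2 = (1 - ‖u‖ ^ 2) * (1 - ‖v‖ ^ 2) / (1 + ⟪u, v⟫) ^ 2 := by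
  by_cases hu0 : u = 0
  · simp [eAdd, hu0]
  have hs : Real.sqrt (1 - ‖u‖ ^ 2) ^ 2 = 1 - ‖u‖ ^ 2 := Real.sq_sqrt (by nlinarith [norm_nonneg u])
  rw [eAdd, if_neg hu0, norm_smul, mul_pow, norm_sq_einstein_numerator hu0 v hs, norm_inv,
    Real.norm_eq_abs, inv_pow, sq_abs]
  field_simp
  ring

/-- Gamma factor identity for Einstein velocity addition. -/
theorem einstein_gamma_identity (u v : EuclideanSpace ℝ (Fin 3))
    (hu : ‖u‖ < 1) (hv : ‖v‖ < 1) :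
    egamma (eAdd u v) = egamma u * egamma v * (1 + ⟪u, v⟫) := by
  have huv := one_add_inner_pos hu hv.le
  have hu' : 0 ≤ 1 - ‖u‖ ^ 2 := by nlinarith [norm_nonneg u]
  rw [egamma, egamma, egamma, one_sub_norm_sq_eAdd hu.le huv.ne', Real.sqrt_div' _ (sq_nonneg _),
    Real.sqrt_mul hu', Real.sqrt_sq huv.le, inv_div, div_eq_mul_inv, mul_inv]
  ring
end

section
/- Every proper orthochronous Lorentz matrix L = [[c, aᵀ],[b, M]] (with c ≥ 1, det L = 1) factors uniquely as L = B(β) R(D) where β = b/c, D = M - (b aᵀ)/(c+1), B(β) is the standard boost matrix and R(D) the spatial rotation embedding; moreover D is in SO(3) and Dᵀ b = a. -/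
open Matrix

/-- The Minkowski form diag(-1,1,1,1) in (1+3)-block form. -/
def etaM : Matrix (Fin 1 ⊕ Fin 3) (Fin 1 ⊕ Fin 3) ℝ :=
  Matrix.fromBlocks (-1) 0 0 1

/-- A 4×4 matrix in (1+3)-block form with scalar `c`, row `a`, column `b`,
and 3×3 block `M`. -/
def blockL (c : ℝ) (a b : Fin 3 → ℝ) (M : Matrix (Fin 3) (Fin 3) ℝ) :
    Matrix (Fin 1 ⊕ Fin 3) (Fin 1 ⊕ Fin 3) ℝ :=
  Matrix.fromBlocks (Matrix.of fun _ _ => c) (Matrix.of fun _ j => a j)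
    (Matrix.of fun i _ => b i) M

/-- Gamma factor of a velocity vector. -/
noncomputable def lgam (β : Fin 3 → ℝ) : ℝ :=
  (Real.sqrt (1 - ∑ i, β i ^ 2))⁻¹

/-- The standard boost matrix with velocity β. -/
noncomputable def boostM (β : Fin 3 → ℝ) :
    Matrix (Fin 1 ⊕ Fin 3) (Fin 1 ⊕ Fin 3) ℝ :=
  Matrix.fromBlocks (Matrix.of fun _ _ => lgam β)
    (Matrix.of fun _ j => lgam β * β j)
    (Matrix.of fun i _ => lgam β * β i)
    (1 + ((lgam β) ^ 2 / (1 + lgam β)) • Matrix.vecMulVec β β)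

/-- The spatial-rotation embedding of a 3×3 matrix. -/
def rotM (D : Matrix (Fin 3) (Fin 3) ℝ) :
    Matrix (Fin 1 ⊕ Fin 3) (Fin 1 ⊕ Fin 3) ℝ :=
  Matrix.fromBlocks 1 0 0 D

/-- Unique polar (boost-rotation) decomposition of a proper orthochronous
Lorentz matrix. -/
theorem lorentz_polar_decomposition (c : ℝ) (a b : Fin 3 → ℝ)
    (M : Matrix (Fin 3) (Fin 3) ℝ)
    (hL : (blockL c a b M)ᵀ * etaM * blockL c a b M = etaM)
    (hc : 1 ≤ c) (hdet : (blockL c a b M).det = 1) :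
    Matrix.transpose (M - (c + 1)⁻¹ • Matrix.vecMulVec b a) *
        (M - (c + 1)⁻¹ • Matrix.vecMulVec b a) = 1 ∧
      (M - (c + 1)⁻¹ • Matrix.vecMulVec b a).det = 1 ∧
      blockL c a b M = boostM (c⁻¹ • b) * rotM (M - (c + 1)⁻¹ • Matrix.vecMulVec b a) ∧
      (M - (c + 1)⁻¹ • Matrix.vecMulVec b a)ᵀ.mulVec b = a ∧
      ∀ (β' : Fin 3 → ℝ) (D' : Matrix (Fin 3) (Fin 3) ℝ),
        (∑ i, β' i ^ 2) < 1 → D'ᵀ * D' = 1 →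
        blockL c a b M = boostM β' * rotM D' →
        β' = c⁻¹ • b ∧ D' = M - (c + 1)⁻¹ • Matrix.vecMulVec b a := by
  have hc0 : c ≠ 0 := by positivity
  have hc1 : c + 1 ≠ 0 := by positivity
  -- reversed Lorentz condition
  have hη : etaM * etaM = 1 := by
    rw [etaM, Matrix.fromBlocks_multiply]
    simp [Matrix.fromBlocks_one]
  have hrev : blockL c a b M * etaM * (blockL c a b M)ᵀ = etaM := by
    have h1 : (etaM * (blockL c a b M)ᵀ * etaM) * blockL c a b M = 1 := by
      calc (etaM * (blockL c a b M)ᵀ * etaM) * blockL c a b M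
          = etaM * ((blockL c a b M)ᵀ * etaM * blockL c a b M) := by
            simp only [Matrix.mul_assoc]
        _ = 1 := by rw [hL, hη]
    have h2 := mul_eq_one_comm.mp h1
    calc blockL c a b M * etaM * (blockL c a b M)ᵀ
        = (blockL c a b M * (etaM * (blockL c a b M)ᵀ * etaM)) * etaM := by
          simp only [Matrix.mul_assoc, hη, Matrix.mul_one]
      _ = etaM := by rw [h2, Matrix.one_mul]
  -- scalar consequences
  rw [blockL, etaM, Matrix.fromBlocks_transpose, Matrix.fromBlocks_multiply,
    Matrix.fromBlocks_multiply, Matrix.fromBlocks_inj] at hL hrev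
  obtain ⟨h11, h12, h21, h22⟩ := hL
  obtain ⟨g11, g12, g21, g22⟩ := hrev
  have hbb : ∑ i, b i * b i = c ^ 2 - 1 := by
    have := congrFun (congrFun h11 0) 0
    simp [Matrix.mul_apply, Matrix.neg_apply, Matrix.one_apply] at this
    linarith [this]
  have haa : ∑ j, a j * a j = c ^ 2 - 1 := by
    have := congrFun (congrFun g11 0) 0
    simp [Matrix.mul_apply, Matrix.neg_apply, Matrix.one_apply] at this
    linarith [this]
  have hMb : ∀ j, ∑ i, b i * M i j = c * a j := by
    intro j
    have := congrFun (congrFun h12 0) j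
    simp [Matrix.mul_apply, Matrix.neg_apply] at this
    linarith [this]
  have hMa : ∀ i, ∑ j, a j * M i j = c * b i := by
    intro i
    have := congrFun (congrFun g12 0) i
    simp [Matrix.mul_apply, Matrix.neg_apply] at this
    linarith [this]
  have hMtM : ∀ i j, ∑ k, M k i * M k j = (if i = j then 1 else 0) + a i * a j := by
    intro i j
    have := congrFun (congrFun h22 i) j
    simp [Matrix.mul_apply, Matrix.neg_apply, Matrix.one_apply, Matrix.add_apply] at this
    linarith [this]
  -- helper identities for the candidate rotation
  have hDb : ∀ j, ∑ k, b k * (M - (c + 1)⁻¹ • Matrix.vecMulVec b a) k j = a j := by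
    intro j
    simp only [Matrix.sub_apply, Matrix.smul_apply, Matrix.vecMulVec_apply, smul_eq_mul]
    calc ∑ k, b k * (M k j - (c+1)⁻¹ * (b k * a j))
        = ∑ k, (b k * M k j - ((c+1)⁻¹ * a j) * (b k * b k)) := by
          apply Finset.sum_congr rfl; intros; ring
      _ = (∑ k, b k * M k j) - (c+1)⁻¹ * a j * (∑ k, b k * b k) := by
          rw [Finset.sum_sub_distrib, ← Finset.mul_sum]
      _ = a j := by rw [hMb, hbb]; field_simp; ring
  have hDa : ∀ i, ∑ k, (M - (c + 1)⁻¹ • Matrix.vecMulVec b a) i k * a k = b i := by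
    intro i
    simp only [Matrix.sub_apply, Matrix.smul_apply, Matrix.vecMulVec_apply, smul_eq_mul]
    calc ∑ k, (M i k - (c+1)⁻¹ * (b i * a k)) * a k
        = ∑ k, (a k * M i k - ((c+1)⁻¹ * b i) * (a k * a k)) := by
          apply Finset.sum_congr rfl; intros; ring
      _ = (∑ k, a k * M i k) - (c+1)⁻¹ * b i * (∑ k, a k * a k) := by
          rw [Finset.sum_sub_distrib, ← Finset.mul_sum]
      _ = b i := by rw [hMa, haa]; field_simp; ring
  have hgoal4 : (M - (c + 1)⁻¹ • Matrix.vecMulVec b a)ᵀ.mulVec b = a := by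
    ext j
    simp only [Matrix.mulVec, dotProduct, Matrix.transpose_apply]
    rw [← hDb j]
    apply Finset.sum_congr rfl; intros; ring
  have hlgam : lgam (c⁻¹ • b) = c := by
    rw [lgam]
    have h1 : (1 : ℝ) - ∑ i, (c⁻¹ • b) i ^ 2 = (c⁻¹)^2 := by
      simp only [Pi.smul_apply, smul_eq_mul, mul_pow]
      rw [← Finset.mul_sum]
      have : ∑ i, b i ^ 2 = c ^ 2 - 1 := by
        rw [← hbb]; apply Finset.sum_congr rfl; intros; ring
      rw [this]; field_simp; ring
    rw [h1, Real.sqrt_sq (by positivity), inv_inv]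
  -- first goal : orthogonality
  have hgoal1 : Matrix.transpose (M - (c + 1)⁻¹ • Matrix.vecMulVec b a) *
      (M - (c + 1)⁻¹ • Matrix.vecMulVec b a) = 1 := by
    ext i j
    simp only [Matrix.mul_apply, Matrix.transpose_apply, Matrix.sub_apply, Matrix.smul_apply,
      Matrix.vecMulVec_apply, smul_eq_mul, Matrix.one_apply]
    calc ∑ k, (M k i - (c+1)⁻¹ * (b k * a i)) * (M k j - (c+1)⁻¹ * (b k * a j))
        = ∑ k, (M k i * M k j - ((c+1)⁻¹ * a i) * (b k * M k j)
            - ((c+1)⁻¹ * a j) * (b k * M k i) + ((c+1)⁻¹^2 * a i * a j) * (b k * b k)) := by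
          apply Finset.sum_congr rfl; intros; ring
      _ = (∑ k, M k i * M k j) - ((c+1)⁻¹ * a i) * (∑ k, b k * M k j)
            - ((c+1)⁻¹ * a j) * (∑ k, b k * M k i) + ((c+1)⁻¹^2 * a i * a j) * (∑ k, b k * b k) := by
          simp [Finset.sum_add_distrib, Finset.sum_sub_distrib, ← Finset.mul_sum]
      _ = (if i = j then 1 else 0) := by
          rw [hMtM, hMb, hMb, hbb]
          split_ifs <;> field_simp <;> ring
  -- second goal : determinant one
  have hgoal2 : (M - (c + 1)⁻¹ • Matrix.vecMulVec b a).det = 1 := by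
    letI : Invertible (Matrix.of fun _ _ => c : Matrix (Fin 1) (Fin 1) ℝ) :=
      ⟨Matrix.of fun _ _ => c⁻¹,
        by ext i j; fin_cases i; fin_cases j; simp [Matrix.mul_apply, inv_mul_cancel₀ hc0],
        by ext i j; fin_cases i; fin_cases j; simp [Matrix.mul_apply, mul_inv_cancel₀ hc0]⟩
    have hinv : ⅟(Matrix.of fun _ _ => c : Matrix (Fin 1) (Fin 1) ℝ)
        = (Matrix.of fun _ _ => c⁻¹ : Matrix (Fin 1) (Fin 1) ℝ) := rfl
    rw [blockL, Matrix.det_fromBlocks₁₁, hinv] at hdet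
    have key : M - (Matrix.of fun i _ => b i : Matrix (Fin 3) (Fin 1) ℝ) *
          (Matrix.of fun _ _ => c⁻¹ : Matrix (Fin 1) (Fin 1) ℝ) *
          (Matrix.of fun _ j => a j : Matrix (Fin 1) (Fin 3) ℝ)
        = (M - (c + 1)⁻¹ • Matrix.vecMulVec b a) *
          (1 - (c*(c+1))⁻¹ • Matrix.vecMulVec a a) := by
      ext i j
      have hDai := hDa i
      simp only [Matrix.sub_apply, Matrix.smul_apply, Matrix.vecMulVec_apply, smul_eq_mul] at hDai
      simp only [Matrix.sub_apply, Matrix.mul_apply, Matrix.smul_apply, Matrix.vecMulVec_apply,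
        smul_eq_mul, Fin.sum_univ_one, Matrix.of_apply, Matrix.one_apply]
      calc M i j - b i * c⁻¹ * a j
          = (M i j - (c+1)⁻¹ * (b i * a j)) - ((c*(c+1))⁻¹ * a j) * b i := by
            field_simp; ring
        _ = (M i j - (c+1)⁻¹ * (b i * a j)) - ((c*(c+1))⁻¹ * a j) *
              (∑ k, (M i k - (c+1)⁻¹ * (b i * a k)) * a k) := by rw [hDai]
        _ = ∑ k, ((M i k - (c+1)⁻¹*(b i*a k)) * (if k = j then 1 else 0)
              - ((c*(c+1))⁻¹*a j) * ((M i k - (c+1)⁻¹*(b i*a k)) * a k)) := by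
            rw [Finset.sum_sub_distrib, ← Finset.mul_sum]
            simp only [mul_ite, mul_one, mul_zero, Finset.sum_ite_eq', Finset.mem_univ, if_true]
        _ = ∑ k, (M i k - (c+1)⁻¹*(b i*a k)) *
              ((if k = j then 1 else 0) - (c*(c+1))⁻¹*(a k*a j)) := by
            apply Finset.sum_congr rfl; intros; ring
    rw [key, Matrix.det_mul] at hdet
    have hsmall : (1 - (c*(c+1))⁻¹ • Matrix.vecMulVec a a : Matrix (Fin 3) (Fin 3) ℝ).det = c⁻¹ := by
      have h2 : (1 : Matrix (Fin 3) (Fin 3) ℝ) - (c*(c+1))⁻¹ • Matrix.vecMulVec a a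
          = 1 + Matrix.replicateCol (Fin 1) ((-(c*(c+1))⁻¹) • a) * Matrix.replicateRow (Fin 1) a := by
        erw [← Matrix.vecMulVec_eq (Fin 1)]
        ext i j
        simp only [Matrix.sub_apply, Matrix.add_apply, Matrix.smul_apply, Matrix.vecMulVec_apply,
          smul_eq_mul, Pi.smul_apply]
        ring
      rw [h2]; erw [Matrix.det_one_add_replicateCol_mul_replicateRow (ι := Fin 1)]
      have : a ⬝ᵥ (-(c*(c+1))⁻¹) • a = (-(c*(c+1))⁻¹) * (c ^ 2 - 1) := by
        rw [← haa, dotProduct, Finset.mul_sum]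
        apply Finset.sum_congr rfl; intros; simp [Pi.smul_apply]; ring
      rw [this]
      field_simp
      ring
    rw [hsmall] at hdet
    have hdetc : (Matrix.of fun _ _ => c : Matrix (Fin 1) (Fin 1) ℝ).det = c := by
      rw [Matrix.det_fin_one]; rfl
    rw [hdetc] at hdet
    rw [mul_comm ((M - (c + 1)⁻¹ • Matrix.vecMulVec b a).det) c⁻¹, ← mul_assoc,
      mul_inv_cancel₀ hc0, one_mul] at hdet
    exact hdet
  -- third goal : the factorization
  have hgoal3 : blockL c a b M =
      boostM (c⁻¹ • b) * rotM (M - (c + 1)⁻¹ • Matrix.vecMulVec b a) := by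
    rw [boostM, rotM, blockL, hlgam, Matrix.fromBlocks_multiply]
    simp only [Matrix.mul_one, Matrix.mul_zero, Matrix.zero_mul, Matrix.one_mul, add_zero,
      zero_add]
    rw [Matrix.fromBlocks_inj]
    refine ⟨rfl, ?_, ?_, ?_⟩
    · ext i j
      simp only [Matrix.mul_apply, Matrix.of_apply, Matrix.zero_apply, Matrix.add_apply,
        Matrix.mul_zero, Matrix.mul_one, Matrix.zero_mul, add_zero, zero_add]
      rw [← hDb j]
      apply Finset.sum_congr rfl
      intro k _
      simp [Pi.smul_apply, smul_eq_mul]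
      field_simp
      simp
    · ext i j; simp [Pi.smul_apply]; field_simp
    · ext i j
      simp only [Matrix.mul_apply, Matrix.of_apply, Matrix.add_apply, Matrix.one_apply,
        Matrix.smul_apply, Matrix.vecMulVec_apply, Pi.smul_apply, smul_eq_mul,
        Matrix.mul_zero, Matrix.mul_one, Matrix.zero_mul, add_zero, zero_add,
        Matrix.zero_apply, Matrix.sub_apply]
      have hDbj := hDb j
      simp only [Matrix.sub_apply, Matrix.smul_apply, Matrix.vecMulVec_apply, smul_eq_mul]
        at hDbj
      calc M i j
          = (M i j - (c + 1)⁻¹ * (b i * a j)) + (c ^ 2 / (1 + c) * (c⁻¹ * b i * c⁻¹))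
              * (∑ k, b k * (M k j - (c + 1)⁻¹ * (b k * a j))) := by
            rw [hDbj]; field_simp; ring
        _ = ∑ x : Fin 3, ((if i = x then 1 else 0) + c ^ 2 / (1 + c) * (c⁻¹ * b i * (c⁻¹ * b x)))
              * (M x j - (c + 1)⁻¹ * (b x * a j)) := by
            rw [Finset.mul_sum]
            simp only [add_mul, Finset.sum_add_distrib, ite_mul, one_mul, zero_mul,
              Finset.sum_ite_eq, Finset.mem_univ, if_true]
            congr 1
            apply Finset.sum_congr rfl; intros; ring
  refine ⟨hgoal1, hgoal2, hgoal3, hgoal4, ?_⟩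
  -- uniqueness
  intro β' D' _hβ' _hD' heq
  rw [blockL, boostM, rotM, Matrix.fromBlocks_multiply] at heq
  simp only [Matrix.mul_one, Matrix.mul_zero, Matrix.zero_mul, Matrix.one_mul, add_zero,
    zero_add] at heq
  rw [Matrix.fromBlocks_inj] at heq
  obtain ⟨e1, e2, e3, e4⟩ := heq
  have hγ : lgam β' = c := (congrFun (congrFun e1 0) 0).symm
  have hb : ∀ i, b i = c * β' i := by
    intro i
    have := congrFun (congrFun e3 i) 0
    rwa [hγ] at this
  have hβ : β' = c⁻¹ • b := by
    funext i
    simp only [Pi.smul_apply, smul_eq_mul, hb i]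
    field_simp
  have ha : ∀ j, a j = ∑ k, b k * D' k j := by
    intro j
    have h := congrFun (congrFun e2 0) j
    rw [Matrix.mul_apply] at h
    simp only [Matrix.of_apply, hγ] at h
    rw [h]
    apply Finset.sum_congr rfl
    intro k _
    rw [hb k]
  refine ⟨hβ, ?_⟩
  have key' : ∀ i j, M i j = D' i j + (c+1)⁻¹ * (b i * a j) := by
    intro i j
    have e4' := congrFun (congrFun e4 i) j
    simp only [hγ] at e4'
    simp only [hβ, Matrix.mul_apply, Matrix.add_apply, Matrix.one_apply, Matrix.smul_apply,
      Matrix.vecMulVec_apply, Pi.smul_apply, smul_eq_mul] at e4'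
    rw [e4']
    calc ∑ k, ((if i = k then 1 else 0) + c^2/(1+c)*(c⁻¹ * b i * (c⁻¹ * b k))) * D' k j
        = ∑ k, ((if i = k then 1 else 0) * D' k j
            + (c^2/(1+c)*c⁻¹*b i*c⁻¹) * (b k * D' k j)) := by
          apply Finset.sum_congr rfl; intros; ring
      _ = D' i j + (c^2/(1+c)*c⁻¹*b i*c⁻¹) * ∑ k, b k * D' k j := by
          rw [Finset.sum_add_distrib, ← Finset.mul_sum]
          simp only [ite_mul, one_mul, zero_mul, Finset.sum_ite_eq, Finset.mem_univ, if_true]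
      _ = D' i j + (c+1)⁻¹ * (b i * a j) := by
          rw [← ha j]
          have hco : c^2/(1+c)*c⁻¹*b i*c⁻¹ = (c+1)⁻¹ * b i := by
            field_simp; ring
          rw [hco, mul_assoc]
  ext i j
  simp only [Matrix.sub_apply, Matrix.smul_apply, Matrix.vecMulVec_apply, smul_eq_mul]
  rw [key' i j]
  ring
end

section
/- With γ₁, γ₂ > 1 fixed and γ = γ₁γ₂(1 + β₁β₂ cos φ) varying with the angle φ between the boost velocities, the Thomas angle cos θ (given by (1+γ+γ₁+γ₂)²/((1+γ)(1+γ₁)(1+γ₂)) - 1) is minimized (i.e. θ maximal) when γ = γ₁ + γ₂ - 1, and then cos θ_max = 1 - 2(γ₁-1)(γ₂-1)/((γ₁+1)(γ₂+1)). -/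
/-!
Write `t = 1 + γ` and `c = γ₁ + γ₂`. Then `f(γ) = (t + c)² / t / ((1 + γ₁)(1 + γ₂)) - 1`, and by AM-GM
`(t + c)² / t ≥ 4c` for `t > 0`, with equality at `t = c`, i.e. at `γ = γ₁ + γ₂ - 1`. This point lies in the
admissible interval because `((γ₁ - 1)(γ₂ - 1))² ≤ (γ₁² - 1)(γ₂² - 1)`, and `t > 0` on the whole interval
because `√((γ₁² - 1)(γ₂² - 1)) ≤ γ₁γ₂`.
-/

noncomputable def thomasCos (γ₁ γ₂ γ : ℝ) : ℝ :=
  (1 + γ + γ₁ + γ₂) ^ 2 / ((1 + γ) * (1 + γ₁) * (1 + γ₂)) - 1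

lemma four_mul_le_sq_add_div_self (c : ℝ) {t : ℝ} (ht : 0 < t) : 4 * c ≤ (t + c) ^ 2 / t := by
  rw [le_div_iff₀ ht]
  linarith [four_mul_le_sq_add t c]

lemma sq_add_self_div_self (c : ℝ) : (c + c) ^ 2 / c = 4 * c := by
  rcases eq_or_ne c 0 with rfl | hc
  · simp
  · field_simp
    ring

section

variable {γ₁ γ₂ : ℝ}

lemma thomasCos_eq (γ₁ γ₂ γ : ℝ) :
    thomasCos γ₁ γ₂ γ = ((1 + γ) + (γ₁ + γ₂)) ^ 2 / (1 + γ) / ((1 + γ₁) * (1 + γ₂)) - 1 := by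
  rw [thomasCos, div_div, mul_assoc]
  ring_nf

lemma thomasCos_add_sub_one_le {γ : ℝ} (hK : 0 ≤ (1 + γ₁) * (1 + γ₂)) (hγ : 0 < 1 + γ) :
    thomasCos γ₁ γ₂ (γ₁ + γ₂ - 1) ≤ thomasCos γ₁ γ₂ γ := by
  rw [thomasCos_eq, thomasCos_eq, add_sub_cancel, sq_add_self_div_self]
  gcongr
  exact four_mul_le_sq_add_div_self _ hγ

lemma thomasCos_add_sub_one (hc : γ₁ + γ₂ ≠ 0) (h₁ : γ₁ + 1 ≠ 0) (h₂ : γ₂ + 1 ≠ 0) :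
    thomasCos γ₁ γ₂ (γ₁ + γ₂ - 1) = 1 - 2 * (γ₁ - 1) * (γ₂ - 1) / ((γ₁ + 1) * (γ₂ + 1)) := by
  have h₁' : 1 + γ₁ ≠ 0 := by rwa [add_comm]
  have h₂' : 1 + γ₂ ≠ 0 := by rwa [add_comm]
  rw [thomasCos, add_sub_cancel]
  field_simp
  ring

lemma mul_sub_one_le_sqrt (h₁ : 1 ≤ γ₁) (h₂ : 1 ≤ γ₂) :
    (γ₁ - 1) * (γ₂ - 1) ≤ √((γ₁ ^ 2 - 1) * (γ₂ ^ 2 - 1)) := by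
  have hp : 0 ≤ (γ₁ - 1) * (γ₂ - 1) := mul_nonneg (by linarith) (by linarith)
  apply Real.le_sqrt_of_sq_le
  have hq : (γ₁ - 1) * (γ₂ - 1) ≤ (γ₁ + 1) * (γ₂ + 1) := by nlinarith
  calc ((γ₁ - 1) * (γ₂ - 1)) ^ 2 ≤ (γ₁ - 1) * (γ₂ - 1) * ((γ₁ + 1) * (γ₂ + 1)) := by
        rw [sq]; exact mul_le_mul_of_nonneg_left hq hp
    _ = (γ₁ ^ 2 - 1) * (γ₂ ^ 2 - 1) := by ring

lemma sqrt_le_mul (h₁ : 1 ≤ γ₁) (h₂ : 1 ≤ γ₂) : √((γ₁ ^ 2 - 1) * (γ₂ ^ 2 - 1)) ≤ γ₁ * γ₂ := by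
  rw [Real.sqrt_le_iff]
  constructor <;> nlinarith

end

/-- The Thomas angle is maximal (cos θ minimal) at γ = γ₁ + γ₂ - 1, with
cos θ_max = 1 - 2(γ₁-1)(γ₂-1)/((γ₁+1)(γ₂+1)). -/
theorem thomas_angle_max (γ₁ γ₂ : ℝ) (h₁ : 1 < γ₁) (h₂ : 1 < γ₂) :
    γ₁ + γ₂ - 1 ∈
        Set.Icc (γ₁ * γ₂ - Real.sqrt ((γ₁ ^ 2 - 1) * (γ₂ ^ 2 - 1)))
          (γ₁ * γ₂ + Real.sqrt ((γ₁ ^ 2 - 1) * (γ₂ ^ 2 - 1))) ∧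
      (∀ γ ∈
          Set.Icc (γ₁ * γ₂ - Real.sqrt ((γ₁ ^ 2 - 1) * (γ₂ ^ 2 - 1)))
            (γ₁ * γ₂ + Real.sqrt ((γ₁ ^ 2 - 1) * (γ₂ ^ 2 - 1))),
        (1 + (γ₁ + γ₂ - 1) + γ₁ + γ₂) ^ 2 /
              ((1 + (γ₁ + γ₂ - 1)) * (1 + γ₁) * (1 + γ₂)) - 1 ≤
          (1 + γ + γ₁ + γ₂) ^ 2 / ((1 + γ) * (1 + γ₁) * (1 + γ₂)) - 1) ∧
      (1 + (γ₁ + γ₂ - 1) + γ₁ + γ₂) ^ 2 /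
          ((1 + (γ₁ + γ₂ - 1)) * (1 + γ₁) * (1 + γ₂)) - 1 =
        1 - 2 * (γ₁ - 1) * (γ₂ - 1) / ((γ₁ + 1) * (γ₂ + 1)) := by
  have hs_lo := mul_sub_one_le_sqrt h₁.le h₂.le
  have hs_hi := sqrt_le_mul h₁.le h₂.le
  have hp : 0 ≤ (γ₁ - 1) * (γ₂ - 1) := mul_nonneg (by linarith) (by linarith)
  refine ⟨⟨by linarith, by linarith⟩, fun γ hγ => ?_, ?_⟩
  · exact thomasCos_add_sub_one_le (by positivity) (by linarith [hγ.1])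
  · exact thomasCos_add_sub_one (by positivity) (by positivity) (by positivity)
end

section
/- Boost-link theorem: Given three unit timelike future-pointing vectors s, s₁, s₂ in Minkowski space with γ₁ = -η(s,s₁), γ₂ = -η(s,s₂), γ₁₂ = -η(s₁,s₂), there exists a unique vector β ∈ T_s𝒮 = {u : η(u,s) = 0} with ‖β‖ < 1 such that the pure boost B(s,β) relative to s maps s₁ to s₂, and it is given by β = ((γ₁+γ₂)/(γ₁² + γ₂² + γ₁₂ - 1)) · P_s^⊥(s₂ - s₁), where P_s^⊥(v) = v + η(v,s)·s. -/
/-!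
A vector is determined by its pairing with `s` and its projection `P_s^⊥`. For `B(s, β) s₁ = s₂`
this splits into a time equation, fixing `η(β, s₁)`, and a space equation
`P_s^⊥(s₂ - s₁) = (γ (γ₁ + γ₂) / (γ + 1)) β`, so `β` is parallel to `P_s^⊥(s₂ - s₁)`.
Comparing `η`-norms, with `η(β, β) = 1 - γ⁻²` and `η(P_s^⊥(s₂ - s₁), P_s^⊥(s₂ - s₁)) = D - E`
where `D = γ₁² + γ₂² + γ₁₂ - 1`, `E = 2γ₁γ₂ - γ₁₂ + 1` and `D + E = (γ₁ + γ₂)²`, forces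
`γ = D / E`, which determines `β`. That `E > 0` is the reverse Cauchy–Schwarz inequality
`γ₁₂ ≤ 2γ₁γ₂ - 1`, from the positivity of `η` on the rest space of `s`.
-/

namespace LinearMap.BilinForm

variable {V : Type*} [AddCommGroup V] [Module ℝ V] (η : LinearMap.BilinForm ℝ V)

theorem sq_apply_le_mul_of_nonneg_on (hsymm : ∀ u v, η u v = η v u) (W : Submodule ℝ V)
    (hW : ∀ w ∈ W, 0 ≤ η w w) {u v : V} (hu : u ∈ W) (hv : v ∈ W) :
    η u v ^ 2 ≤ η u u * η v v := by
  have hq : ∀ t : ℝ, 0 ≤ η v v * (t * t) + 2 * η u v * t + η u u := fun t => by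
    have := hW (u + t • v) (W.add_mem hu (W.smul_mem t hv))
    simp only [map_add, map_smul, LinearMap.add_apply, LinearMap.smul_apply, smul_eq_mul,
      hsymm v u] at this
    linarith
  have := discrim_le_zero hq
  rw [discrim] at this
  linarith

/-- The paper's `P_s^⊥`, the projection onto `{u | η s u = 0}` when `η s s = -1`. -/
def spatialPart (s : V) : V →ₗ[ℝ] V := LinearMap.id + (η.flip s).smulRight s

noncomputable def lorentzFactor (b : V) : ℝ := (√(1 - η b b))⁻¹

/-- The paper's `B(s, β)`, with `β = ‖β‖ n` and `n ⊗ n` rewritten in terms of `β ⊗ β` using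
`(γ - 1) / ‖β‖² = γ² / (γ + 1)`. -/
noncomputable def pureBoost (s b v : V) : V :=
  let γ := η.lorentzFactor b
  v + ((1 - γ) * η s v) • s + (γ ^ 2 / (γ + 1) * η b v) • b + γ • (η b v • s - η s v • b)

variable {η} {s b : V}

theorem spatialPart_apply (s v : V) : η.spatialPart s v = v + η v s • s := rfl

theorem apply_spatialPart (hsymm : ∀ u v, η u v = η v u) (hs : η s s = -1) (v : V) :
    η s (η.spatialPart s v) = 0 := by
  simp only [spatialPart_apply, map_add, map_smul, smul_eq_mul, hs, hsymm s v]
  ring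

theorem spatialPart_apply_spatialPart (hsymm : ∀ u v, η u v = η v u) (hs : η s s = -1)
    (x y : V) : η (η.spatialPart s x) (η.spatialPart s y) = η x y + η x s * η s y := by
  simp only [spatialPart_apply, map_add, map_smul, LinearMap.add_apply, LinearMap.smul_apply,
    smul_eq_mul, hs, hsymm y s]
  ring

theorem spatialPart_self (hs : η s s = -1) : η.spatialPart s s = 0 := by
  simp [spatialPart_apply, hs]

theorem spatialPart_eq_self (hsymm : ∀ u v, η u v = η v u) (hb : η s b = 0) :
    η.spatialPart s b = b := by
  simp [spatialPart_apply, hsymm b s, hb]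

theorem eq_of_apply_eq_of_spatialPart_eq (hsymm : ∀ u v, η u v = η v u) {x y : V}
    (h : η s x = η s y) (hP : η.spatialPart s x = η.spatialPart s y) : x = y := by
  simpa only [spatialPart_apply, hsymm _ s, h, add_left_inj] using hP

theorem lorentzFactor_pos (h : η b b < 1) : 0 < η.lorentzFactor b :=
  inv_pos.2 (Real.sqrt_pos.2 (by linarith))

theorem apply_self_eq_one_sub_inv_lorentzFactor_sq (h : η b b < 1) :
    η b b = 1 - (η.lorentzFactor b)⁻¹ ^ 2 := by
  rw [lorentzFactor, inv_inv, Real.sq_sqrt (by linarith)]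
  ring

theorem lorentzFactor_eq_inv {c : ℝ} (hc : 0 ≤ c) (h : η b b = 1 - c ^ 2) :
    η.lorentzFactor b = c⁻¹ := by
  rw [lorentzFactor, h, sub_sub_cancel, Real.sqrt_sq hc]

theorem apply_pureBoost (hs : η s s = -1) (hb : η s b = 0) (v : V) :
    η s (η.pureBoost s b v) = η.lorentzFactor b * (η s v - η b v) := by
  simp only [pureBoost, map_add, map_sub, map_smul, smul_eq_mul, hs, hb]
  ring

theorem spatialPart_pureBoost_sub (hsymm : ∀ u v, η u v = η v u) (hs : η s s = -1)
    (hb : η s b = 0) (v : V) :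
    η.spatialPart s (η.pureBoost s b v - v) =
      (η.lorentzFactor b ^ 2 / (η.lorentzFactor b + 1) * η b v -
        η.lorentzFactor b * η s v) • b := by
  simp only [pureBoost, add_assoc, add_sub_cancel_left, map_add, map_sub, map_smul,
    spatialPart_self hs, spatialPart_eq_self hsymm hb]
  module

theorem pureBoost_apply_eq_iff (hsymm : ∀ u v, η u v = η v u) (hs : η s s = -1)
    (hb : η s b = 0) (hbb : η b b < 1) {v w : V} :
    η.pureBoost s b v = w ↔
      η s w = η.lorentzFactor b * (η s v - η b v) ∧
        η.spatialPart s (w - v) =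
          (-(η.lorentzFactor b * (η s v + η s w)) / (η.lorentzFactor b + 1)) • b := by
  have hγ := lorentzFactor_pos hbb
  constructor
  · rintro rfl
    refine ⟨apply_pureBoost hs hb v, ?_⟩
    rw [spatialPart_pureBoost_sub hsymm hs hb, apply_pureBoost hs hb]
    congr 1
    field_simp
    ring
  · rintro ⟨hw, hP⟩
    refine eq_of_apply_eq_of_spatialPart_eq hsymm (by rw [apply_pureBoost hs hb, hw]) ?_
    have : η.spatialPart s (η.pureBoost s b v - v) = η.spatialPart s (w - v) := by
      rw [spatialPart_pureBoost_sub hsymm hs hb, hP, hw]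
      congr 1
      field_simp
      ring
    rwa [map_sub, map_sub, sub_left_inj] at this

theorem neg_apply_le_two_mul_apply_mul_apply_sub_one (hsymm : ∀ u v, η u v = η v u)
    (hnn : ∀ u, η s u = 0 → 0 ≤ η u u) (hs : η s s = -1) {s₁ s₂ : V} (hs₁ : η s₁ s₁ = -1)
    (hs₂ : η s₂ s₂ = -1) (h₁ : 1 ≤ -η s s₁) (h₂ : 1 ≤ -η s s₂) :
    -η s₁ s₂ ≤ 2 * η s s₁ * η s s₂ - 1 := by
  have hCS := sq_apply_le_mul_of_nonneg_on η hsymm (LinearMap.ker (η s)) hnn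
    (apply_spatialPart hsymm hs s₁) (apply_spatialPart hsymm hs s₂)
  simp only [spatialPart_apply_spatialPart hsymm hs, hs₁, hs₂, hsymm s₁ s, hsymm s₂ s] at hCS
  nlinarith [sq_nonneg (η s s₁ - η s s₂), mul_le_mul h₁ h₂ zero_le_one (by linarith)]

section Link

variable {s₁ s₂ : V} {γ₁ γ₂ γ₁₂ : ℝ}

variable (η) in
noncomputable def linkVelocity (s s₁ s₂ : V) (γ₁ γ₂ γ₁₂ : ℝ) : V :=
  ((γ₁ + γ₂) / (γ₁ ^ 2 + γ₂ ^ 2 + γ₁₂ - 1)) • η.spatialPart s (s₂ - s₁)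

theorem spatialPart_sub_apply_self (hsymm : ∀ u v, η u v = η v u) (hs : η s s = -1)
    (hs₁ : η s₁ s₁ = -1) (hs₂ : η s₂ s₂ = -1) (hγ₁ : η s s₁ = -γ₁) (hγ₂ : η s s₂ = -γ₂)
    (hγ₁₂ : η s₁ s₂ = -γ₁₂) :
    η (η.spatialPart s (s₂ - s₁)) (η.spatialPart s (s₂ - s₁)) = (γ₁ - γ₂) ^ 2 + 2 * γ₁₂ - 2 := by
  simp only [spatialPart_apply_spatialPart hsymm hs, map_sub, LinearMap.sub_apply, hs₁, hs₂,
    hγ₁, hγ₂, hγ₁₂, hsymm s₂ s₁, hsymm _ s]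
  ring

theorem apply_linkVelocity (hsymm : ∀ u v, η u v = η v u) (hs : η s s = -1) :
    η s (η.linkVelocity s s₁ s₂ γ₁ γ₂ γ₁₂) = 0 := by
  rw [linkVelocity, map_smul, apply_spatialPart hsymm hs, smul_zero]

theorem linkVelocity_apply_self (hsymm : ∀ u v, η u v = η v u) (hs : η s s = -1)
    (hs₁ : η s₁ s₁ = -1) (hs₂ : η s₂ s₂ = -1) (hγ₁ : η s s₁ = -γ₁) (hγ₂ : η s s₂ = -γ₂)
    (hγ₁₂ : η s₁ s₂ = -γ₁₂) (hD : γ₁ ^ 2 + γ₂ ^ 2 + γ₁₂ - 1 ≠ 0) :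
    η (η.linkVelocity s s₁ s₂ γ₁ γ₂ γ₁₂) (η.linkVelocity s s₁ s₂ γ₁ γ₂ γ₁₂) =
      1 - ((2 * γ₁ * γ₂ - γ₁₂ + 1) / (γ₁ ^ 2 + γ₂ ^ 2 + γ₁₂ - 1)) ^ 2 := by
  simp only [linkVelocity, map_smul, LinearMap.smul_apply, smul_eq_mul,
    spatialPart_sub_apply_self hsymm hs hs₁ hs₂ hγ₁ hγ₂ hγ₁₂]
  field_simp
  ring

theorem lorentzFactor_linkVelocity (hsymm : ∀ u v, η u v = η v u) (hs : η s s = -1)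
    (hs₁ : η s₁ s₁ = -1) (hs₂ : η s₂ s₂ = -1) (hγ₁ : η s s₁ = -γ₁) (hγ₂ : η s s₂ = -γ₂)
    (hγ₁₂ : η s₁ s₂ = -γ₁₂) (hD : 0 < γ₁ ^ 2 + γ₂ ^ 2 + γ₁₂ - 1)
    (hE : 0 < 2 * γ₁ * γ₂ - γ₁₂ + 1) :
    η.lorentzFactor (η.linkVelocity s s₁ s₂ γ₁ γ₂ γ₁₂) =
      (γ₁ ^ 2 + γ₂ ^ 2 + γ₁₂ - 1) / (2 * γ₁ * γ₂ - γ₁₂ + 1) := by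
  rw [lorentzFactor_eq_inv (by positivity)
    (linkVelocity_apply_self hsymm hs hs₁ hs₂ hγ₁ hγ₂ hγ₁₂ hD.ne'), inv_div]

theorem linkVelocity_apply_self_lt_one (hsymm : ∀ u v, η u v = η v u) (hs : η s s = -1)
    (hs₁ : η s₁ s₁ = -1) (hs₂ : η s₂ s₂ = -1) (hγ₁ : η s s₁ = -γ₁) (hγ₂ : η s s₂ = -γ₂)
    (hγ₁₂ : η s₁ s₂ = -γ₁₂) (hD : 0 < γ₁ ^ 2 + γ₂ ^ 2 + γ₁₂ - 1)
    (hE : 0 < 2 * γ₁ * γ₂ - γ₁₂ + 1) :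
    η (η.linkVelocity s s₁ s₂ γ₁ γ₂ γ₁₂) (η.linkVelocity s s₁ s₂ γ₁ γ₂ γ₁₂) < 1 := by
  rw [linkVelocity_apply_self hsymm hs hs₁ hs₂ hγ₁ hγ₂ hγ₁₂ hD.ne', sub_lt_self_iff]
  positivity

theorem pureBoost_linkVelocity (hsymm : ∀ u v, η u v = η v u) (hs : η s s = -1)
    (hs₁ : η s₁ s₁ = -1) (hs₂ : η s₂ s₂ = -1) (hγ₁ : η s s₁ = -γ₁) (hγ₂ : η s s₂ = -γ₂)
    (hγ₁₂ : η s₁ s₂ = -γ₁₂) (hD : 0 < γ₁ ^ 2 + γ₂ ^ 2 + γ₁₂ - 1)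
    (hE : 0 < 2 * γ₁ * γ₂ - γ₁₂ + 1) :
    η.pureBoost s (η.linkVelocity s s₁ s₂ γ₁ γ₂ γ₁₂) s₁ = s₂ := by
  rw [pureBoost_apply_eq_iff hsymm hs (apply_linkVelocity hsymm hs)
    (linkVelocity_apply_self_lt_one hsymm hs hs₁ hs₂ hγ₁ hγ₂ hγ₁₂ hD hE),
    lorentzFactor_linkVelocity hsymm hs hs₁ hs₂ hγ₁ hγ₂ hγ₁₂ hD hE, hγ₁, hγ₂, linkVelocity]
  set D := γ₁ ^ 2 + γ₂ ^ 2 + γ₁₂ - 1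
  set E := 2 * γ₁ * γ₂ - γ₁₂ + 1
  have hDE : D / E + 1 ≠ 0 := by positivity
  constructor
  · simp only [map_smul, LinearMap.smul_apply, spatialPart_apply, map_add,
      map_sub, LinearMap.add_apply, LinearMap.sub_apply, smul_eq_mul, hs₁, hγ₁, hγ₂, hγ₁₂,
      hsymm s₂ s₁, hsymm _ s]
    field_simp
    ring
  · rw [smul_smul, eq_comm]
    convert one_smul ℝ _
    field_simp
    ring

theorem eq_linkVelocity_of_pureBoost_apply_eq (hsymm : ∀ u v, η u v = η v u)
    (hs : η s s = -1) (hs₁ : η s₁ s₁ = -1) (hs₂ : η s₂ s₂ = -1) (hγ₁ : η s s₁ = -γ₁)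
    (hγ₂ : η s s₂ = -γ₂) (hγ₁₂ : η s₁ s₂ = -γ₁₂) (hD : γ₁ ^ 2 + γ₂ ^ 2 + γ₁₂ - 1 ≠ 0)
    (hb : η s b = 0) (hbb : η b b < 1) (hB : η.pureBoost s b s₁ = s₂) :
    b = η.linkVelocity s s₁ s₂ γ₁ γ₂ γ₁₂ := by
  obtain ⟨-, hP⟩ := (pureBoost_apply_eq_iff hsymm hs hb hbb).1 hB
  rw [hγ₁, hγ₂] at hP
  have hg := lorentzFactor_pos hbb
  have hbb' := apply_self_eq_one_sub_inv_lorentzFactor_sq hbb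
  set g := η.lorentzFactor b
  have hgE : g * (2 * γ₁ * γ₂ - γ₁₂ + 1) = γ₁ ^ 2 + γ₂ ^ 2 + γ₁₂ - 1 := by
    have := congrArg (fun x => η x x) hP
    simp only [map_smul, LinearMap.smul_apply, smul_eq_mul, hbb',
      spatialPart_sub_apply_self hsymm hs hs₁ hs₂ hγ₁ hγ₂ hγ₁₂] at this
    field_simp at this
    have : (g + 1) * (g * (2 * γ₁ * γ₂ - γ₁₂ + 1) - (γ₁ ^ 2 + γ₂ ^ 2 + γ₁₂ - 1)) = 0 := by
      linear_combination -this / 2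
    linarith [(mul_eq_zero.1 this).resolve_left (by positivity)]
  rw [linkVelocity, hP, smul_smul]
  convert (one_smul ℝ b).symm
  field_simp
  linear_combination hgE

end Link

end LinearMap.BilinForm

/-- Boost-link theorem: given states of motion `s, s₁, s₂`, there is a unique
velocity `β` orthogonal to `s` with `‖β‖ < 1` such that the pure boost
relative to `s` with velocity `β` maps `s₁` to `s₂`; it is given by
`β = ((γ₁+γ₂)/(γ₁²+γ₂²+γ₁₂-1)) • P_s^⊥(s₂ - s₁)`. -/
theorem boost_link_theorem (V : Type*) [AddCommGroup V] [Module ℝ V]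
    (η : LinearMap.BilinForm ℝ V) (hsymm : ∀ u v, η u v = η v u)
    (s s₁ s₂ : V)
    (hpos : ∀ u, η s u = 0 → u ≠ 0 → 0 < η u u)
    (hs : η s s = -1) (hs₁ : η s₁ s₁ = -1) (hs₂ : η s₂ s₂ = -1)
    (γ₁ γ₂ γ₁₂ : ℝ)
    (hγ₁ : η s s₁ = -γ₁) (hγ₂ : η s s₂ = -γ₂) (hγ₁₂ : η s₁ s₂ = -γ₁₂)
    (h1 : 1 ≤ γ₁) (h2 : 1 ≤ γ₂) (h12 : 1 ≤ γ₁₂)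
    (Bst : V → V → V)
    (hBst : ∀ b v, Bst b v =
      v + ((1 - (Real.sqrt (1 - η b b))⁻¹) * η s v) • s +
        (((Real.sqrt (1 - η b b))⁻¹ ^ 2 / ((Real.sqrt (1 - η b b))⁻¹ + 1)) *
            η b v) • b +
        (Real.sqrt (1 - η b b))⁻¹ • ((η b v) • s - (η s v) • b))
    (βv : V)
    (hβv : βv = ((γ₁ + γ₂) / (γ₁ ^ 2 + γ₂ ^ 2 + γ₁₂ - 1)) •
      (s₂ - s₁ + (η (s₂ - s₁) s) • s)) :
    (η s βv = 0 ∧ η βv βv < 1 ∧ Bst βv s₁ = s₂) ∧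
      ∀ b, η s b = 0 → η b b < 1 → Bst b s₁ = s₂ → b = βv := by
  open LinearMap.BilinForm in
  obtain rfl : Bst = η.pureBoost s := funext fun b => funext (hBst b)
  obtain rfl : βv = η.linkVelocity s s₁ s₂ γ₁ γ₂ γ₁₂ := by rw [hβv, linkVelocity, spatialPart_apply]
  have hE : 0 < 2 * γ₁ * γ₂ - γ₁₂ + 1 := by
    have := neg_apply_le_two_mul_apply_mul_apply_sub_one hsymm
      (fun u hu => (eq_or_ne u 0).elim (fun h => by simp [h]) fun h => (hpos u hu h).le)
      hs hs₁ hs₂ (by linarith) (by linarith)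
    rw [hγ₁, hγ₂, hγ₁₂] at this
    linarith
  have hD : 0 < γ₁ ^ 2 + γ₂ ^ 2 + γ₁₂ - 1 := by nlinarith
  exact ⟨⟨apply_linkVelocity hsymm hs,
    linkVelocity_apply_self_lt_one hsymm hs hs₁ hs₂ hγ₁ hγ₂ hγ₁₂ hD hE,
    pureBoost_linkVelocity hsymm hs hs₁ hs₂ hγ₁ hγ₂ hγ₁₂ hD hE⟩,
    fun b hb hbb =>
      eq_linkVelocity_of_pureBoost_apply_eq hsymm hs hs₁ hs₂ hγ₁ hγ₂ hγ₁₂ hD.ne' hb hbb⟩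
end

section
/- With the notation of the boost-link theorem, the gamma factor of the linking boost is γ = (γ₁² + γ₂² + γ₁₂ - 1)/(1 + 2γ₁γ₂ - γ₁₂), and it satisfies γ = γ₁₂ - ‖s⊥‖²·(γ₁₂² - 1)/(1 + 2γ₁γ₂ - γ₁₂), where s⊥ is the component of s orthogonal to the plane spanned by s₁ and s₂. In particular γ ≤ γ₁₂, with equality iff s lies in span{s₁, s₂}. -/
/-!
The residual `s⊥ = s - P(s)` is `η`-orthogonal to `s₁` and `s₂`, so
`η(s⊥, s⊥) = η(s, s⊥) = η(s, s) - η(s, P(s))`, which evaluates to the stated quotient; clearing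
denominators turns the formula for `γ` into this identity. As `η` is positive definite on the
orthogonal complement of the plane, the correction term is nonnegative and vanishes iff `s⊥ = 0`,
i.e. iff `s` lies in the plane.
-/

namespace LinearMap.BilinForm

variable {R M : Type*} [CommSemiring R] [AddCommMonoid M] [Module R M]

theorem apply_eq_zero_of_mem_span_pair (B : LinearMap.BilinForm R M) {x y u v : M}
    (hv : v ∈ Submodule.span R {x, y}) (hx : B x u = 0) (hy : B y u = 0) : B v u = 0 := by
  obtain ⟨a, b, rfl⟩ := Submodule.mem_span_pair.mp hv
  simp [hx, hy]

end LinearMap.BilinForm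

section BoostLink

variable {V : Type*} [AddCommGroup V] [Module ℝ V]

/-- `P(s)` in the coordinates `s₁, s₂`; it depends on `s` only through `γ₁ = -η(s,s₁)` and
`γ₂ = -η(s,s₂)`. -/
noncomputable def planeComponent (γ₁ γ₂ γ₁₂ : ℝ) (s₁ s₂ : V) : V :=
  (γ₁₂ ^ 2 - 1)⁻¹ • ((-γ₁) • s₁ + (-γ₂) • s₂ - γ₁₂ • ((-γ₂) • s₁ + (-γ₁) • s₂))

theorem planeComponent_mem_span (γ₁ γ₂ γ₁₂ : ℝ) (s₁ s₂ : V) :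
    planeComponent γ₁ γ₂ γ₁₂ s₁ s₂ ∈ Submodule.span ℝ ({s₁, s₂} : Set V) :=
  Submodule.mem_span_pair.mpr
    ⟨(γ₁₂ ^ 2 - 1)⁻¹ * (γ₁₂ * γ₂ - γ₁), (γ₁₂ ^ 2 - 1)⁻¹ * (γ₁₂ * γ₁ - γ₂),
      by unfold planeComponent; module⟩

variable (η : LinearMap.BilinForm ℝ V) {s s₁ s₂ : V} {γ₁ γ₂ γ₁₂ : ℝ}

theorem apply_sub_planeComponent_left (hd : γ₁₂ ^ 2 - 1 ≠ 0)
    (h₁₁ : η s₁ s₁ = -1) (h₁₂ : η s₁ s₂ = -γ₁₂) (h₁ : η s₁ s = -γ₁) :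
    η s₁ (s - planeComponent γ₁ γ₂ γ₁₂ s₁ s₂) = 0 := by
  simp only [planeComponent, map_sub, map_add, map_smul, smul_eq_mul, h₁₁, h₁₂, h₁]
  field_simp
  ring

theorem apply_sub_planeComponent_right (hd : γ₁₂ ^ 2 - 1 ≠ 0)
    (h₂₁ : η s₂ s₁ = -γ₁₂) (h₂₂ : η s₂ s₂ = -1) (h₂ : η s₂ s = -γ₂) :
    η s₂ (s - planeComponent γ₁ γ₂ γ₁₂ s₁ s₂) = 0 := by
  simp only [planeComponent, map_sub, map_add, map_smul, smul_eq_mul, h₂₁, h₂₂, h₂]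
  field_simp
  ring

theorem apply_self_sub_planeComponent_mul (hd : γ₁₂ ^ 2 - 1 ≠ 0)
    (hs : η s s = -1) (h₁ : η s s₁ = -γ₁) (h₂ : η s s₂ = -γ₂)
    (hperp₁ : η s₁ (s - planeComponent γ₁ γ₂ γ₁₂ s₁ s₂) = 0)
    (hperp₂ : η s₂ (s - planeComponent γ₁ γ₂ γ₁₂ s₁ s₂) = 0) :
    η (s - planeComponent γ₁ γ₂ γ₁₂ s₁ s₂) (s - planeComponent γ₁ γ₂ γ₁₂ s₁ s₂) *
        (γ₁₂ ^ 2 - 1) = 1 - γ₁ ^ 2 - γ₂ ^ 2 - γ₁₂ ^ 2 + 2 * γ₁ * γ₂ * γ₁₂ := by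
  set P := planeComponent γ₁ γ₂ γ₁₂ s₁ s₂ with hP
  have hPperp : η P (s - P) = 0 :=
    η.apply_eq_zero_of_mem_span_pair (planeComponent_mem_span γ₁ γ₂ γ₁₂ s₁ s₂) hperp₁ hperp₂
  have hsP : η s P * (γ₁₂ ^ 2 - 1) = γ₁ ^ 2 + γ₂ ^ 2 - 2 * γ₁ * γ₂ * γ₁₂ := by
    simp only [hP, planeComponent, map_sub, map_add, map_smul, smul_eq_mul, h₁, h₂]
    field_simp
    ring
  calc η (s - P) (s - P) * (γ₁₂ ^ 2 - 1)
      = (η s s - η s P) * (γ₁₂ ^ 2 - 1) := by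
        rw [LinearMap.BilinForm.sub_left, hPperp, sub_zero, LinearMap.BilinForm.sub_right]
    _ = 1 - γ₁ ^ 2 - γ₂ ^ 2 - γ₁₂ ^ 2 + 2 * γ₁ * γ₂ * γ₁₂ := by
        rw [sub_mul, hsP, hs]
        ring

end BoostLink

theorem link_gamma_eq_sub_of_mul_eq {γ₁ γ₂ γ₁₂ N : ℝ} (hD : 1 + 2 * γ₁ * γ₂ - γ₁₂ ≠ 0)
    (hN : N * (γ₁₂ ^ 2 - 1) = 1 - γ₁ ^ 2 - γ₂ ^ 2 - γ₁₂ ^ 2 + 2 * γ₁ * γ₂ * γ₁₂) :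
    (γ₁ ^ 2 + γ₂ ^ 2 + γ₁₂ - 1) / (1 + 2 * γ₁ * γ₂ - γ₁₂) =
      γ₁₂ - N * (γ₁₂ ^ 2 - 1) / (1 + 2 * γ₁ * γ₂ - γ₁₂) := by
  rw [hN, eq_sub_iff_add_eq, ← add_div, div_eq_iff hD]
  ring

theorem link_gamma_base_point_dependence_general (V : Type*) [AddCommGroup V]
    [Module ℝ V] (η : LinearMap.BilinForm ℝ V) (hsymm : ∀ u v, η u v = η v u)
    (s s₁ s₂ : V)
    (hs : η s s = -1) (hs₁ : η s₁ s₁ = -1) (hs₂ : η s₂ s₂ = -1)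
    (γ₁ γ₂ γ₁₂ : ℝ)
    (hγ₁ : η s s₁ = -γ₁) (hγ₂ : η s s₂ = -γ₂) (hγ₁₂ : η s₁ s₂ = -γ₁₂)
    (h12 : 1 < γ₁₂)
    (hD : 1 < 1 + 2 * γ₁ * γ₂ - γ₁₂)
    (hpos : ∀ u, η s₁ u = 0 → η s₂ u = 0 → 0 ≤ η u u ∧ (η u u = 0 → u = 0))
    (sperp : V)
    (hsperp : sperp = s - (γ₁₂ ^ 2 - 1)⁻¹ •
      ((-γ₁) • s₁ + (-γ₂) • s₂ - γ₁₂ • ((-γ₂) • s₁ + (-γ₁) • s₂)))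
    (γ : ℝ)
    (hγ : γ = (γ₁ ^ 2 + γ₂ ^ 2 + γ₁₂ - 1) / (1 + 2 * γ₁ * γ₂ - γ₁₂)) :
    γ = γ₁₂ - η sperp sperp * (γ₁₂ ^ 2 - 1) / (1 + 2 * γ₁ * γ₂ - γ₁₂) ∧
      γ ≤ γ₁₂ ∧
      (γ = γ₁₂ ↔ s ∈ Submodule.span ℝ ({s₁, s₂} : Set V)) := by
  replace hsperp : sperp = s - planeComponent γ₁ γ₂ γ₁₂ s₁ s₂ := hsperp
  have hd : 0 < γ₁₂ ^ 2 - 1 := by nlinarith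
  have hDpos : 0 < 1 + 2 * γ₁ * γ₂ - γ₁₂ := by linarith
  have hperp₁ : η s₁ sperp = 0 :=
    hsperp ▸ apply_sub_planeComponent_left η hd.ne' hs₁ hγ₁₂ (hsymm s₁ s ▸ hγ₁)
  have hperp₂ : η s₂ sperp = 0 :=
    hsperp ▸ apply_sub_planeComponent_right η hd.ne' (hsymm s₂ s₁ ▸ hγ₁₂) hs₂ (hsymm s₂ s ▸ hγ₂)
  have hformula : γ = γ₁₂ - η sperp sperp * (γ₁₂ ^ 2 - 1) / (1 + 2 * γ₁ * γ₂ - γ₁₂) := by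
    subst hsperp
    exact hγ ▸ link_gamma_eq_sub_of_mul_eq hDpos.ne'
      (apply_self_sub_planeComponent_mul η hd.ne' hs hγ₁ hγ₂ hperp₁ hperp₂)
  obtain ⟨hnonneg, hdef⟩ := hpos sperp hperp₁ hperp₂
  have hcorr : 0 ≤ η sperp sperp * (γ₁₂ ^ 2 - 1) / (1 + 2 * γ₁ * γ₂ - γ₁₂) := by positivity
  refine ⟨hformula, by linarith, ?_⟩
  calc γ = γ₁₂ ↔ η sperp sperp = 0 := by
        rw [hformula, sub_eq_self, div_eq_zero_iff, mul_eq_zero]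
        simp [hd.ne', hDpos.ne']
    _ ↔ sperp ∈ Submodule.span ℝ {s₁, s₂} :=
        ⟨fun h ↦ hdef h ▸ Submodule.zero_mem _,
          fun h ↦ η.apply_eq_zero_of_mem_span_pair h hperp₁ hperp₂⟩
    _ ↔ s ∈ Submodule.span ℝ {s₁, s₂} :=
        hsperp ▸ Submodule.sub_mem_iff_left _ (planeComponent_mem_span γ₁ γ₂ γ₁₂ s₁ s₂)

/-- Base-point dependence of the link gamma factor:
`γ = γ₁₂ - ‖s⊥‖²(γ₁₂²-1)/(1+2γ₁γ₂-γ₁₂)`, hence `γ ≤ γ₁₂`, with equality iff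
`s` lies in the plane spanned by `s₁` and `s₂`. -/
theorem link_gamma_base_point_dependence (V : Type*) [AddCommGroup V]
    [Module ℝ V] (η : LinearMap.BilinForm ℝ V) (hsymm : ∀ u v, η u v = η v u)
    (s s₁ s₂ : V)
    (hs : η s s = -1) (hs₁ : η s₁ s₁ = -1) (hs₂ : η s₂ s₂ = -1)
    (γ₁ γ₂ γ₁₂ : ℝ)
    (hγ₁ : η s s₁ = -γ₁) (hγ₂ : η s s₂ = -γ₂) (hγ₁₂ : η s₁ s₂ = -γ₁₂)
    (h1 : 1 ≤ γ₁) (h2 : 1 ≤ γ₂) (h12 : 1 < γ₁₂)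
    (hD : 1 < 1 + 2 * γ₁ * γ₂ - γ₁₂)
    (hpos : ∀ u, η s₁ u = 0 → η s₂ u = 0 → 0 ≤ η u u ∧ (η u u = 0 → u = 0))
    (sperp : V)
    (hsperp : sperp = s - (γ₁₂ ^ 2 - 1)⁻¹ •
      ((-γ₁) • s₁ + (-γ₂) • s₂ - γ₁₂ • ((-γ₂) • s₁ + (-γ₁) • s₂)))
    (γ : ℝ)
    (hγ : γ = (γ₁ ^ 2 + γ₂ ^ 2 + γ₁₂ - 1) / (1 + 2 * γ₁ * γ₂ - γ₁₂)) :
    γ = γ₁₂ - η sperp sperp * (γ₁₂ ^ 2 - 1) / (1 + 2 * γ₁ * γ₂ - γ₁₂) ∧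
      γ ≤ γ₁₂ ∧
      (γ = γ₁₂ ↔ s ∈ Submodule.span ℝ ({s₁, s₂} : Set V)) :=
  link_gamma_base_point_dependence_general V η hsymm s s₁ s₂ hs hs₁ hs₂ γ₁ γ₂ γ₁₂ hγ₁ hγ₂ hγ₁₂ h12
    hD hpos sperp hsperp γ hγ
end
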